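/- The 2-stabilizer Rényi entropy of the single-qubit golden state equals log(3/2): with G = (1/2)(I + (X+Y+Z)/√3), one has (1/2)Σ_{P∈{I,X,Y,Z}} Tr⁴(P·G) = 2/3, hence M₂(G) = −log[(1/2)Σ_P Tr⁴(P G)] = log(3/2). -/

import Mathlib

/-!
The Pauli matrices are orthogonal for the trace form, `Tr(σₐ σ_b) = 2 δₐ_b`, so `Tr(σₐ ρ)` reads off
the Pauli coefficients of `ρ = ½ Σ_b r_b σ_b`. For the golden state these are
`1, 1/√3, 1/√3, 1/√3`, whence `Σₐ Tr⁴(σₐ G) = 1 + 3 · (1/9) = 4/3`.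
-/

open Matrix Complex

noncomputable def pauli : Fin 4 → Matrix (Fin 2) (Fin 2) ℂ :=
  ![1, !![0, 1; 1, 0], !![0, -Complex.I; Complex.I, 0], !![1, 0; 0, -1]]

noncomputable def goldenState : Matrix (Fin 2) (Fin 2) ℂ :=
  (1 / 2 : ℂ) • (1 + ((Real.sqrt 3 : ℂ))⁻¹ • (pauli 1 + pauli 2 + pauli 3))

theorem trace_pauli_mul_pauli (a b : Fin 4) :
    trace (pauli a * pauli b) = if a = b then 2 else 0 := by
  fin_cases a <;> fin_cases b <;>
    simp [pauli, trace_fin_two, one_add_one_eq_two]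

theorem trace_pauli_mul_sum_smul_pauli (r : Fin 4 → ℂ) (a : Fin 4) :
    trace (pauli a * ∑ b, r b • pauli b) = 2 * r a := by
  simp only [Matrix.mul_sum, Matrix.mul_smul, trace_sum, trace_smul, trace_pauli_mul_pauli,
    smul_eq_mul, mul_ite, mul_zero, Finset.sum_ite_eq, Finset.mem_univ, if_true]
  ring

theorem goldenState_eq_half_smul_sum :
    goldenState = (1 / 2 : ℂ) • ∑ b, ![1, (Real.sqrt 3 : ℂ)⁻¹, (Real.sqrt 3 : ℂ)⁻¹,
      (Real.sqrt 3 : ℂ)⁻¹] b • pauli b := by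
  have pauli_zero : pauli 0 = 1 := rfl
  simp only [goldenState, Fin.sum_univ_four, pauli_zero, Matrix.cons_val, one_smul, smul_add,
    add_assoc]

theorem trace_pauli_mul_goldenState (a : Fin 4) :
    trace (pauli a * goldenState) =
      ![1, (Real.sqrt 3 : ℂ)⁻¹, (Real.sqrt 3 : ℂ)⁻¹, (Real.sqrt 3 : ℂ)⁻¹] a := by
  rw [goldenState_eq_half_smul_sum, Matrix.mul_smul, trace_smul,
    trace_pauli_mul_sum_smul_pauli, smul_eq_mul]
  ring

theorem inv_sqrt_three_pow_four : ((Real.sqrt 3 : ℂ)⁻¹) ^ 4 = 1 / 9 := by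
  have sqrt_three_sq : (Real.sqrt 3 : ℂ) ^ 2 = 3 := by
    exact_mod_cast Real.sq_sqrt (by norm_num : (0 : ℝ) ≤ 3)
  rw [inv_pow, show 4 = 2 * 2 from rfl, pow_mul, sqrt_three_sq]
  norm_num

theorem goldenState_stabilizer_entropy :
    (1 / 2 : ℂ) * ∑ a : Fin 4, (Matrix.trace (pauli a * goldenState)) ^ 4 = 2 / 3 ∧
    -Real.log (2 / 3) = Real.log (3 / 2) := by
  constructor
  · simp only [trace_pauli_mul_goldenState, Fin.sum_univ_four, Matrix.cons_val,
      inv_sqrt_three_pow_four]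
    norm_num
  · rw [← Real.log_inv, inv_div]
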